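/- With the setup of the second variation formula (γ, η disjoint unit speed geodesics in a simply connected nonpositively curved manifold, φ(r,s) = d(η(r),γ(s)), σ the connecting geodesic at (r₀,s₀), V, W the associated Jacobi fields, and Ψ(r,s,t) the variation through geodesics from η(r) to γ(s)), the third mixed partial satisfies ∂³_{rss} φ(r₀,s₀) = −⟨V₀^⊥, (D²_s ∂_t Ψ)^⊥|_{(r₀,s₀,0)}⟩ + 2⟨D_t W₀^⊥, V₀^⊥⟩⟨D_t W₀, σ'(0)⟩ + |D_t W₀^⊥|²⟨V₀, σ'(0)⟩. -/

import Mathlib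

open Set

section ChartModel

variable {E : Type*} [NormedAddCommGroup E] [InnerProductSpace ℝ E]

/-- Covariant derivative, along the curve `c`, of the vector field `X` along `c`, for the
connection with Christoffel symbol `Γ`, in a global chart (the universal cover is
diffeomorphic to `ℝⁿ`, so its tangent bundle is trivialized by a single chart `E`). -/
noncomputable def covD (Γ : E → E → E → E) (c X : ℝ → E) : ℝ → E :=
  fun t => deriv X t + Γ (c t) (deriv c t) (X t)

/-- Curvature endomorphism `R(u,v)w` of the connection `Γ` in the chart. -/
noncomputable def curvOp (Γ : E → E → E → E) (x u v w : E) : E :=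
  fderiv ℝ (fun y => Γ y v w) x u - fderiv ℝ (fun y => Γ y u w) x v
    + Γ x u (Γ x v w) - Γ x v (Γ x u w)

/-- Partial derivative in the first variable. -/
noncomputable def pd1 (f : ℝ → ℝ → ℝ) (r s : ℝ) : ℝ := deriv (fun x => f x s) r

/-- Partial derivative in the second variable. -/
noncomputable def pd2 (f : ℝ → ℝ → ℝ) (r s : ℝ) : ℝ := deriv (fun y => f r y) s


set_option linter.unusedSectionVars false
set_option maxHeartbeats 1000000

section AuxHelpers

variable {E : Type*} [NormedAddCommGroup E] [InnerProductSpace ℝ E]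
variable {G : E → E → E → ℝ} {Γ : E → E → E → E}

lemma aux_hasDerivAt_slot3 {X : Type*} [NormedAddCommGroup X] [NormedSpace ℝ X]
    {f : ℝ × ℝ × ℝ → X} {r s t : ℝ} (hf : DifferentiableAt ℝ f (r, s, t)) :
    HasDerivAt (fun τ => f (r, s, τ)) (fderiv ℝ f (r, s, t) (0, 0, 1)) t := by
  have hι : HasDerivAt (fun τ : ℝ => ((r, s, τ) : ℝ × ℝ × ℝ)) (0, 0, 1) t :=
    (hasDerivAt_const t r).prodMk ((hasDerivAt_const t s).prodMk (hasDerivAt_id t))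
  exact hf.hasFDerivAt.comp_hasDerivAt t hι

lemma aux_hasDerivAt_slot2 {X : Type*} [NormedAddCommGroup X] [NormedSpace ℝ X]
    {f : ℝ × ℝ × ℝ → X} {r s t : ℝ} (hf : DifferentiableAt ℝ f (r, s, t)) :
    HasDerivAt (fun σ => f (r, σ, t)) (fderiv ℝ f (r, s, t) (0, 1, 0)) s := by
  have hι : HasDerivAt (fun σ : ℝ => ((r, σ, t) : ℝ × ℝ × ℝ)) (0, 1, 0) s :=
    (hasDerivAt_const s r).prodMk ((hasDerivAt_id s).prodMk (hasDerivAt_const s t))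
  exact hf.hasFDerivAt.comp_hasDerivAt s hι

lemma aux_hasDerivAt_slot1 {X : Type*} [NormedAddCommGroup X] [NormedSpace ℝ X]
    {f : ℝ × ℝ × ℝ → X} {r s t : ℝ} (hf : DifferentiableAt ℝ f (r, s, t)) :
    HasDerivAt (fun ρ => f (ρ, s, t)) (fderiv ℝ f (r, s, t) (1, 0, 0)) r := by
  have hι : HasDerivAt (fun ρ : ℝ => ((ρ, s, t) : ℝ × ℝ × ℝ)) (1, 0, 0) r :=
    (hasDerivAt_id r).prodMk ((hasDerivAt_const r s).prodMk (hasDerivAt_const r t))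
  exact hf.hasFDerivAt.comp_hasDerivAt r hι

lemma aux_hasDerivAt_fst {X : Type*} [NormedAddCommGroup X] [NormedSpace ℝ X]
    {f : ℝ × ℝ → X} {r s : ℝ} (hf : DifferentiableAt ℝ f (r, s)) :
    HasDerivAt (fun ρ => f (ρ, s)) (fderiv ℝ f (r, s) (1, 0)) r := by
  have hι : HasDerivAt (fun ρ : ℝ => ((ρ, s) : ℝ × ℝ)) (1, 0) r :=
    (hasDerivAt_id r).prodMk (hasDerivAt_const r s)
  exact hf.hasFDerivAt.comp_hasDerivAt r hι

lemma aux_hasDerivAt_snd {X : Type*} [NormedAddCommGroup X] [NormedSpace ℝ X]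
    {f : ℝ × ℝ → X} {r s : ℝ} (hf : DifferentiableAt ℝ f (r, s)) :
    HasDerivAt (fun σ => f (r, σ)) (fderiv ℝ f (r, s) (0, 1)) s := by
  have hι : HasDerivAt (fun σ : ℝ => ((r, σ) : ℝ × ℝ)) (0, 1) s :=
    (hasDerivAt_const s r).prodMk (hasDerivAt_id s)
  exact hf.hasFDerivAt.comp_hasDerivAt s hι

lemma aux_hasDerivAt_clm_slot3 {X P : Type*} [NormedAddCommGroup X] [NormedSpace ℝ X]
    [NormedAddCommGroup P] [NormedSpace ℝ P]
    {M : ℝ × ℝ × ℝ → (P →L[ℝ] X)} {r s t : ℝ} (hM : DifferentiableAt ℝ M (r, s, t)) (w : P) :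
    HasDerivAt (fun τ => M (r, s, τ) w) (fderiv ℝ M (r, s, t) (0, 0, 1) w) t := by
  have h := (aux_hasDerivAt_slot3 hM).clm_apply (hasDerivAt_const t w)
  simpa using h

lemma aux_hasDerivAt_clm_slot2 {X P : Type*} [NormedAddCommGroup X] [NormedSpace ℝ X]
    [NormedAddCommGroup P] [NormedSpace ℝ P]
    {M : ℝ × ℝ × ℝ → (P →L[ℝ] X)} {r s t : ℝ} (hM : DifferentiableAt ℝ M (r, s, t)) (w : P) :
    HasDerivAt (fun σ => M (r, σ, t) w) (fderiv ℝ M (r, s, t) (0, 1, 0) w) s := by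
  have h := (aux_hasDerivAt_slot2 hM).clm_apply (hasDerivAt_const s w)
  simpa using h

lemma aux_hasDerivAt_clm_slot1 {X P : Type*} [NormedAddCommGroup X] [NormedSpace ℝ X]
    [NormedAddCommGroup P] [NormedSpace ℝ P]
    {M : ℝ × ℝ × ℝ → (P →L[ℝ] X)} {r s t : ℝ} (hM : DifferentiableAt ℝ M (r, s, t)) (w : P) :
    HasDerivAt (fun ρ => M (ρ, s, t) w) (fderiv ℝ M (r, s, t) (1, 0, 0) w) r := by
  have h := (aux_hasDerivAt_slot1 hM).clm_apply (hasDerivAt_const r w)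
  simpa using h

lemma aux_hasDerivAt_clm_fst {X P : Type*} [NormedAddCommGroup X] [NormedSpace ℝ X]
    [NormedAddCommGroup P] [NormedSpace ℝ P]
    {M : ℝ × ℝ → (P →L[ℝ] X)} {r s : ℝ} (hM : DifferentiableAt ℝ M (r, s)) (w : P) :
    HasDerivAt (fun ρ => M (ρ, s) w) (fderiv ℝ M (r, s) (1, 0) w) r := by
  have h := (aux_hasDerivAt_fst hM).clm_apply (hasDerivAt_const r w)
  simpa using h

lemma aux_hasDerivAt_clm_snd {X P : Type*} [NormedAddCommGroup X] [NormedSpace ℝ X]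
    [NormedAddCommGroup P] [NormedSpace ℝ P]
    {M : ℝ × ℝ → (P →L[ℝ] X)} {r s : ℝ} (hM : DifferentiableAt ℝ M (r, s)) (w : P) :
    HasDerivAt (fun σ => M (r, σ) w) (fderiv ℝ M (r, s) (0, 1) w) s := by
  have h := (aux_hasDerivAt_snd hM).clm_apply (hasDerivAt_const s w)
  simpa using h

lemma aux_Gsmul2 (hGsymm : ∀ x u v, G x u v = G x v u)
    (hGsmul : ∀ (x : E) (a : ℝ) (u w : E), G x (a • u) w = a * G x u w)
    (x : E) (a : ℝ) (u w : E) : G x u (a • w) = a * G x u w := by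
  rw [hGsymm, hGsmul, hGsymm]

lemma aux_Gadd2 (hGsymm : ∀ x u v, G x u v = G x v u)
    (hGadd : ∀ x u v w, G x (u + v) w = G x u w + G x v w)
    (x u v w : E) : G x u (v + w) = G x u v + G x u w := by
  rw [hGsymm, hGadd, hGsymm x v, hGsymm x w]

lemma aux_Gzero1 (hGsmul : ∀ (x : E) (a : ℝ) (u w : E), G x (a • u) w = a * G x u w)
    (x w : E) : G x 0 w = 0 := by
  have := hGsmul x 0 0 w
  simpa using this

lemma aux_Gzero2 (hGsymm : ∀ x u v, G x u v = G x v u)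
    (hGsmul : ∀ (x : E) (a : ℝ) (u w : E), G x (a • u) w = a * G x u w)
    (x u : E) : G x u 0 = 0 := by
  rw [hGsymm]; exact aux_Gzero1 hGsmul x u

lemma aux_Γzero2 (hΓsmul : ∀ (x : E) (a : ℝ) (u w : E), Γ x u (a • w) = a • Γ x u w)
    (x u : E) : Γ x u 0 = 0 := by
  have := hΓsmul x 0 u 0
  simpa using this

lemma aux_Γzero1 (hΓsymm : ∀ x u v, Γ x u v = Γ x v u)
    (hΓsmul : ∀ (x : E) (a : ℝ) (u w : E), Γ x u (a • w) = a • Γ x u w)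
    (x w : E) : Γ x 0 w = 0 := by
  rw [hΓsymm]; exact aux_Γzero2 hΓsmul x w

/-- decomposition of the full derivative of `G` -/
lemma aux_Gfderiv_decomp
    (hGsmooth : ContDiff ℝ (⊤ : ℕ∞) (fun p : E × E × E => G p.1 p.2.1 p.2.2))
    (hGsymm : ∀ x u v, G x u v = G x v u)
    (hGadd : ∀ x u v w, G x (u + v) w = G x u w + G x v w)
    (hGsmul : ∀ (x : E) (a : ℝ) (u w : E), G x (a • u) w = a * G x u w)
    (x u v a b c : E) :
    fderiv ℝ (fun p : E × E × E => G p.1 p.2.1 p.2.2) (x, u, v) (a, b, c)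
      = fderiv ℝ (fun y => G y u v) x a + G x b v + G x u c := by
  set Gu : E × E × E → ℝ := fun p => G p.1 p.2.1 p.2.2 with hGu
  have hdiff : DifferentiableAt ℝ Gu (x, u, v) :=
    (hGsmooth.differentiable (by simp)).differentiableAt
  have hsplit : ((a, b, c) : E × E × E) = (a, 0, 0) + (0, b, 0) + (0, 0, c) := by
    simp [Prod.ext_iff]
  have h1 : fderiv ℝ Gu (x, u, v) (a, 0, 0) = fderiv ℝ (fun y => G y u v) x a := by
    have hj : HasFDerivAt (fun y : E => ((y, u, v) : E × E × E))
        ((ContinuousLinearMap.id ℝ E).prod (0 : E →L[ℝ] E × E)) x :=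
      (hasFDerivAt_id x).prodMk (hasFDerivAt_const (u, v) x)
    have hcomp : HasFDerivAt (fun y : E => Gu (y, u, v))
        ((fderiv ℝ Gu (x, u, v)).comp ((ContinuousLinearMap.id ℝ E).prod 0)) x :=
      by have := hdiff.hasFDerivAt.comp x hj; exact this
    have heq : fderiv ℝ (fun y => G y u v) x
        = (fderiv ℝ Gu (x, u, v)).comp ((ContinuousLinearMap.id ℝ E).prod 0) := by
      have h0 : (fun y : E => Gu (y, u, v)) = fun y => G y u v := rfl
      rw [← h0]; exact hcomp.fderiv
    rw [heq]; rfl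
  have h2 : fderiv ℝ Gu (x, u, v) (0, b, 0) = G x b v := by
    have hcurve : HasDerivAt (fun τ : ℝ => ((x, u + τ • b, v) : E × E × E)) (0, b, 0) 0 := by
      have hb : HasDerivAt (fun τ : ℝ => u + τ • b) b 0 := by
        simpa using (((hasDerivAt_id (0:ℝ)).smul_const b).const_add u)
      exact (hasDerivAt_const 0 x).prodMk (hb.prodMk (hasDerivAt_const 0 v))
    have h1' : HasDerivAt (fun τ : ℝ => Gu (x, u + τ • b, v))
        (fderiv ℝ Gu (x, u, v) (0, b, 0)) 0 := by
      have hpt : ((x, u + (0:ℝ) • b, v) : E × E × E) = (x, u, v) := by simp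
      have hf' : HasFDerivAt Gu (fderiv ℝ Gu (x, u, v)) (x, u + (0:ℝ) • b, v) :=
        hpt ▸ hdiff.hasFDerivAt
      exact hf'.comp_hasDerivAt 0 hcurve
    have h2' : (fun τ : ℝ => Gu (x, u + τ • b, v)) = fun τ => G x u v + τ * G x b v := by
      funext τ
      show G x (u + τ • b) v = _
      rw [hGadd, hGsmul]
    have h3' : HasDerivAt (fun τ : ℝ => G x u v + τ * G x b v) (G x b v) 0 := by
      simpa using (((hasDerivAt_id (0:ℝ)).mul_const (G x b v)).const_add (G x u v))
    rw [h2'] at h1'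
    exact h1'.unique h3'
  have h3 : fderiv ℝ Gu (x, u, v) (0, 0, c) = G x u c := by
    have hcurve : HasDerivAt (fun τ : ℝ => ((x, u, v + τ • c) : E × E × E)) (0, 0, c) 0 := by
      have hb : HasDerivAt (fun τ : ℝ => v + τ • c) c 0 := by
        simpa using (((hasDerivAt_id (0:ℝ)).smul_const c).const_add v)
      exact (hasDerivAt_const 0 x).prodMk ((hasDerivAt_const 0 u).prodMk hb)
    have h1' : HasDerivAt (fun τ : ℝ => Gu (x, u, v + τ • c))
        (fderiv ℝ Gu (x, u, v) (0, 0, c)) 0 := by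
      have hpt : ((x, u, v + (0:ℝ) • c) : E × E × E) = (x, u, v) := by simp
      have hf' : HasFDerivAt Gu (fderiv ℝ Gu (x, u, v)) (x, u, v + (0:ℝ) • c) :=
        hpt ▸ hdiff.hasFDerivAt
      exact hf'.comp_hasDerivAt 0 hcurve
    have h2' : (fun τ : ℝ => Gu (x, u, v + τ • c)) = fun τ => G x u v + τ * G x u c := by
      funext τ
      show G x u (v + τ • c) = _
      rw [aux_Gadd2 hGsymm hGadd, aux_Gsmul2 hGsymm hGsmul]
    have h3' : HasDerivAt (fun τ : ℝ => G x u v + τ * G x u c) (G x u c) 0 := by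
      simpa using (((hasDerivAt_id (0:ℝ)).mul_const (G x u c)).const_add (G x u v))
    rw [h2'] at h1'
    exact h1'.unique h3'
  rw [hsplit, map_add, map_add, h1, h2, h3]

/-- Chain rule for `G` along curves, rewritten with covariant derivatives via compatibility. -/
lemma aux_chainG
    (hGsmooth : ContDiff ℝ (⊤ : ℕ∞) (fun p : E × E × E => G p.1 p.2.1 p.2.2))
    (hGsymm : ∀ x u v, G x u v = G x v u)
    (hGadd : ∀ x u v w, G x (u + v) w = G x u w + G x v w)
    (hGsmul : ∀ (x : E) (a : ℝ) (u w : E), G x (a • u) w = a * G x u w)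
    (hcompat : ∀ x u v w,
      fderiv ℝ (fun y => G y v w) x u = G x (Γ x u v) w + G x v (Γ x u w))
    {x u v : ℝ → E} {x' u' v' : E} {t : ℝ}
    (hx : HasDerivAt x x' t) (hu : HasDerivAt u u' t) (hv : HasDerivAt v v' t) :
    HasDerivAt (fun τ => G (x τ) (u τ) (v τ))
      (G (x t) (u' + Γ (x t) x' (u t)) (v t) + G (x t) (u t) (v' + Γ (x t) x' (v t))) t := by
  set Gu : E × E × E → ℝ := fun p => G p.1 p.2.1 p.2.2 with hGu
  have hcurve : HasDerivAt (fun τ => ((x τ, u τ, v τ) : E × E × E)) (x', u', v') t :=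
    hx.prodMk (hu.prodMk hv)
  have hdiff : HasFDerivAt Gu (fderiv ℝ Gu (x t, u t, v t)) (x t, u t, v t) :=
    ((hGsmooth.differentiable (by simp)).differentiableAt).hasFDerivAt
  have hcomp : HasDerivAt (fun τ => Gu (x τ, u τ, v τ))
      (fderiv ℝ Gu (x t, u t, v t) (x', u', v')) t :=
    by have := hdiff.comp_hasDerivAt t hcurve; exact this
  have hval : fderiv ℝ Gu (x t, u t, v t) (x', u', v')
      = G (x t) (u' + Γ (x t) x' (u t)) (v t) + G (x t) (u t) (v' + Γ (x t) x' (v t)) := by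
    rw [aux_Gfderiv_decomp hGsmooth hGsymm hGadd hGsmul, hcompat,
      hGadd, aux_Gadd2 hGsymm hGadd]
    ring
  rw [hval] at hcomp
  exact hcomp

end AuxHelpers

/-- Third variation formula (3.10): with the setup of the second variation formula (global chart E for the simply connected nonpositively curved manifold, metric G, Levi-Civita connection Γ, disjoint unit speed geodesics η, γ, variation Ψ through connecting geodesics, φ(r,s) = d(η(r),γ(s)), σ = Ψ(r₀,s₀,·) unit speed, Jacobi fields V = ∂_rΨ, W = ∂_sΨ at (r₀,s₀)),
∂³_{rss} φ(r₀,s₀) = −⟨V₀^⊥, (D²_s ∂_t Ψ)^⊥|_{(r₀,s₀,0)}⟩ + 2⟨D_t W₀^⊥, V₀^⊥⟩⟨D_t W₀, σ'(0)⟩ + |D_t W₀^⊥|²⟨V₀, σ'(0)⟩. -/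
theorem stmt_9
    (G : E → E → E → ℝ) (Γ : E → E → E → E)
    (η γ : ℝ → E) (Ψ : ℝ → ℝ → ℝ → E) (φ : ℝ → ℝ → ℝ) (ρ₀ r₀ s₀ : ℝ)
    -- the metric tensor: smooth, symmetric, bilinear, positive definite
    (hGsmooth : ContDiff ℝ (⊤ : ℕ∞) (fun p : E × E × E => G p.1 p.2.1 p.2.2))
    (hGsymm : ∀ x u v, G x u v = G x v u)
    (hGadd : ∀ x u v w, G x (u + v) w = G x u w + G x v w)
    (hGsmul : ∀ (x : E) (a : ℝ) (u w : E), G x (a • u) w = a * G x u w)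
    (hGpos : ∀ (x : E) (v : E), v ≠ 0 → 0 < G x v v)
    -- the Levi-Civita connection: smooth, symmetric (torsion-free), bilinear, compatible with G
    (hΓsmooth : ContDiff ℝ (⊤ : ℕ∞) (fun p : E × E × E => Γ p.1 p.2.1 p.2.2))
    (hΓsymm : ∀ x u v, Γ x u v = Γ x v u)
    (hΓadd : ∀ x u v w, Γ x u (v + w) = Γ x u v + Γ x u w)
    (hΓsmul : ∀ (x : E) (a : ℝ) (u w : E), Γ x u (a • w) = a • Γ x u w)
    (hcompat : ∀ x u v w,
      fderiv ℝ (fun y => G y v w) x u = G x (Γ x u v) w + G x v (Γ x u w))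
    -- nonpositive sectional curvature
    (hnonpos : ∀ x u v, G x (curvOp Γ x u v v) u ≤ 0)
    -- `η, γ` are disjoint unit speed geodesics on `[0,1]`
    (hηgeo : ∀ r, covD Γ η (deriv η) r = 0)
    (hγgeo : ∀ s, covD Γ γ (deriv γ) s = 0)
    (hηunit : ∀ r, G (η r) (deriv η r) (deriv η r) = 1)
    (hγunit : ∀ s, G (γ s) (deriv γ s) (deriv γ s) = 1)
    (hdisj : ∀ r ∈ Icc (0:ℝ) 1, ∀ s ∈ Icc (0:ℝ) 1, η r ≠ γ s)
    -- `Ψ` is the smooth variation through connecting geodesics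
    (hΨsmooth : ContDiff ℝ (⊤ : ℕ∞) (fun p : ℝ × ℝ × ℝ => Ψ p.1 p.2.1 p.2.2))
    (hΨgeo : ∀ r s t, covD Γ (Ψ r s) (deriv (Ψ r s)) t = 0)
    (hΨ0 : ∀ r s, Ψ r s 0 = η r) (hΨρ : ∀ r s, Ψ r s ρ₀ = γ s)
    -- `φ(r,s) = d(η(r),γ(s))` is the length of the connecting geodesic
    (hφ : ∀ r s, φ r s =
      ∫ t in (0:ℝ)..ρ₀, Real.sqrt (G (Ψ r s t) (deriv (Ψ r s) t) (deriv (Ψ r s) t)))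
    (hρpos : 0 < ρ₀) (hρ₀ : ρ₀ = φ r₀ s₀)
    (hr₀ : r₀ ∈ Icc (0:ℝ) 1) (hs₀ : s₀ ∈ Icc (0:ℝ) 1) :
    let σ := Ψ r₀ s₀
    let p := σ 0
    let e := deriv σ 0
    let V : ℝ → E := fun t => deriv (fun r => Ψ r s₀ t) r₀
    let W : ℝ → E := fun t => deriv (fun s => Ψ r₀ s t) s₀
    let DtW0 := covD Γ σ W 0
    -- `D_s ∂_t Ψ` at `(r₀, s, t)`, then `D²_s ∂_t Ψ` at `(r₀, s₀, 0)`
    let DsdtΨ : ℝ → ℝ → E := fun s t =>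
      covD Γ (fun u => Ψ r₀ u t) (fun u => deriv (Ψ r₀ u) t) s
    let A := covD Γ (fun u => Ψ r₀ u 0) (fun u => DsdtΨ u 0) s₀
    let perp : E → E := fun X => X - (G p X e) • e
    pd1 (pd2 (pd2 φ)) r₀ s₀ =
      -(G p (perp (V 0)) (perp A))
        + 2 * G p (perp DtW0) (perp (V 0)) * G p DtW0 e
        + G p (perp DtW0) (perp DtW0) * G p (V 0) e := by
  intro σ p e V W DtW0 DsdtΨ A perp
  -- bilinearity consequences
  have hGadd2 : ∀ (x u v w : E), G x u (v + w) = G x u v + G x u w := aux_Gadd2 hGsymm hGadd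
  have hGsmul2 : ∀ (x : E) (a : ℝ) (u w : E), G x u (a • w) = a * G x u w :=
    aux_Gsmul2 hGsymm hGsmul
  have hGzero1 : ∀ x w : E, G x 0 w = 0 := aux_Gzero1 hGsmul
  have hGzero2 : ∀ x u : E, G x u 0 = 0 := aux_Gzero2 hGsymm hGsmul
  have hΓzero1 : ∀ x w : E, Γ x 0 w = 0 := aux_Γzero1 hΓsymm hΓsmul
  have hΓzero2 : ∀ x u : E, Γ x u 0 = 0 := aux_Γzero2 hΓsmul
  have hρne : ρ₀ ≠ 0 := ne_of_gt hρpos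
  -- smooth uncurried variation and its derivatives
  set Ψu : ℝ × ℝ × ℝ → E := fun q => Ψ q.1 q.2.1 q.2.2 with hΨudef
  have hΨuC : ContDiff ℝ (⊤ : ℕ∞) Ψu := hΨsmooth
  have hΨuD : Differentiable ℝ Ψu := hΨuC.differentiable (by simp)
  set F1 : ℝ × ℝ × ℝ → (ℝ × ℝ × ℝ →L[ℝ] E) := fderiv ℝ Ψu with hF1def
  have hF1C : ContDiff ℝ (⊤ : ℕ∞) F1 := hΨuC.fderiv_right (by simp)
  have hF1D : Differentiable ℝ F1 := hF1C.differentiable (by simp)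
  set F2 : ℝ × ℝ × ℝ → (ℝ × ℝ × ℝ →L[ℝ] ℝ × ℝ × ℝ →L[ℝ] E) := fderiv ℝ F1 with hF2def
  have hF2C : ContDiff ℝ (⊤ : ℕ∞) F2 := hF1C.fderiv_right (by simp)
  set Tu : ℝ × ℝ × ℝ → E := fun q => F1 q (0, 0, 1) with hTudef
  have hTuC : ContDiff ℝ (⊤ : ℕ∞) Tu := hF1C.clm_apply contDiff_const
  set Vu : ℝ × ℝ × ℝ → E := fun q => F1 q (1, 0, 0) with hVudef
  set Wu : ℝ × ℝ × ℝ → E := fun q => F1 q (0, 1, 0) with hWudef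
  have hT : ∀ r s t, HasDerivAt (Ψ r s) (Tu (r, s, t)) t := fun r s t =>
    aux_hasDerivAt_slot3 (f := Ψu) (hΨuD _)
  have hV : ∀ r s t, HasDerivAt (fun ρ => Ψ ρ s t) (Vu (r, s, t)) r := fun r s t =>
    aux_hasDerivAt_slot1 (f := Ψu) (hΨuD _)
  have hW : ∀ r s t, HasDerivAt (fun σ' => Ψ r σ' t) (Wu (r, s, t)) s := fun r s t =>
    aux_hasDerivAt_slot2 (f := Ψu) (hΨuD _)
  have hsymmF2 : ∀ q a b, F2 q a b = F2 q b a := fun q a b =>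
    second_derivative_symmetric (fun y => (hΨuD y).hasFDerivAt) ((hF1D q).hasFDerivAt) a b
  have hTt : ∀ r s t, HasDerivAt (fun τ => Tu (r, s, τ)) (F2 (r, s, t) (0, 0, 1) (0, 0, 1)) t :=
    fun r s t => aux_hasDerivAt_clm_slot3 (M := F1) (hF1D _) _
  have hTr : ∀ r s t, HasDerivAt (fun ρ => Tu (ρ, s, t)) (F2 (r, s, t) (1, 0, 0) (0, 0, 1)) r :=
    fun r s t => aux_hasDerivAt_clm_slot1 (M := F1) (hF1D _) _
  have hTs : ∀ r s t, HasDerivAt (fun σ' => Tu (r, σ', t)) (F2 (r, s, t) (0, 1, 0) (0, 0, 1)) s :=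
    fun r s t => aux_hasDerivAt_clm_slot2 (M := F1) (hF1D _) _
  have hVt : ∀ r s t, HasDerivAt (fun τ => Vu (r, s, τ)) (F2 (r, s, t) (0, 0, 1) (1, 0, 0)) t :=
    fun r s t => aux_hasDerivAt_clm_slot3 (M := F1) (hF1D _) _
  have hWt : ∀ r s t, HasDerivAt (fun τ => Wu (r, s, τ)) (F2 (r, s, t) (0, 0, 1) (0, 1, 0)) t :=
    fun r s t => aux_hasDerivAt_clm_slot3 (M := F1) (hF1D _) _
  -- geodesic equation in terms of F2
  have hgeo : ∀ r s t,
      F2 (r, s, t) (0, 0, 1) (0, 0, 1) + Γ (Ψ r s t) (Tu (r, s, t)) (Tu (r, s, t)) = 0 := by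
    intro r s t
    have h0 := hΨgeo r s t
    have hfe : deriv (Ψ r s) = fun τ => Tu (r, s, τ) := funext fun τ => (hT r s τ).deriv
    rw [covD] at h0
    simp only [hfe] at h0
    rwa [(hTt r s t).deriv] at h0
  -- the squared speed, constant along each geodesic
  set Cu : ℝ × ℝ × ℝ → ℝ := fun q => G (Ψu q) (Tu q) (Tu q) with hCudef
  have hCuC : ContDiff ℝ (⊤ : ℕ∞) Cu := hGsmooth.comp (hΨuC.prodMk (hTuC.prodMk hTuC))
  set cu : ℝ × ℝ → ℝ := fun z => Cu (z.1, z.2, 0) with hcudef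
  have hcuC : ContDiff ℝ (⊤ : ℕ∞) cu := by
    have hl : ContDiff ℝ (⊤ : ℕ∞) (fun z : ℝ × ℝ => ((z.1, z.2, 0) : ℝ × ℝ × ℝ)) :=
      contDiff_fst.prodMk (contDiff_snd.prodMk contDiff_const)
    exact hCuC.comp hl
  have hcuD : Differentiable ℝ cu := hcuC.differentiable (by simp)
  have hCconst : ∀ r s t, Cu (r, s, t) = cu (r, s) := by
    intro r s t
    have hder : ∀ τ : ℝ, HasDerivAt (fun τ' => Cu (r, s, τ')) 0 τ := by
      intro τ
      have h := aux_chainG hGsmooth hGsymm hGadd hGsmul hcompat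
        (hT r s τ) (hTt r s τ) (hTt r s τ)
      have hval : G (Ψ r s τ)
            (F2 (r, s, τ) (0, 0, 1) (0, 0, 1) + Γ (Ψ r s τ) (Tu (r, s, τ)) (Tu (r, s, τ)))
            (Tu (r, s, τ))
          + G (Ψ r s τ) (Tu (r, s, τ))
            (F2 (r, s, τ) (0, 0, 1) (0, 0, 1) + Γ (Ψ r s τ) (Tu (r, s, τ)) (Tu (r, s, τ)))
          = 0 := by
        rw [hgeo r s τ, hGzero1, hGzero2, add_zero]
      rw [hval] at h
      exact h
    have hdiff : Differentiable ℝ (fun τ' => Cu (r, s, τ')) := fun τ => (hder τ).differentiableAt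
    have hconst := is_const_of_deriv_eq_zero hdiff (fun τ => (hder τ).deriv) t 0
    exact hconst
  have hφc : ∀ r s, φ r s = ρ₀ * Real.sqrt (cu (r, s)) := by
    intro r s
    rw [hφ r s]
    have hint : (fun t => Real.sqrt (G (Ψ r s t) (deriv (Ψ r s) t) (deriv (Ψ r s) t)))
        = fun _ => Real.sqrt (cu (r, s)) := by
      funext t
      rw [(hT r s t).deriv]
      exact congrArg Real.sqrt (hCconst r s t)
    rw [hint, intervalIntegral.integral_const, sub_zero, smul_eq_mul]
  have hc1 : cu (r₀, s₀) = 1 := by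
    have h := hρ₀
    rw [hφc r₀ s₀] at h
    have hx : ρ₀ * 1 = ρ₀ * Real.sqrt (cu (r₀, s₀)) := by rw [mul_one]; exact h
    have hs := (mul_left_cancel₀ hρne hx).symm
    exact Real.sqrt_eq_one.mp hs
  -- partial derivatives of the squared speed
  set d1 : ℝ × ℝ → ℝ := fun z => fderiv ℝ cu z (1, 0) with hd1def
  set d2 : ℝ × ℝ → ℝ := fun z => fderiv ℝ cu z (0, 1) with hd2def
  have hd1C : ContDiff ℝ (⊤ : ℕ∞) d1 := (hcuC.fderiv_right (by simp)).clm_apply contDiff_const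
  have hd2C : ContDiff ℝ (⊤ : ℕ∞) d2 := (hcuC.fderiv_right (by simp)).clm_apply contDiff_const
  have hd1D : Differentiable ℝ d1 := hd1C.differentiable (by simp)
  have hd2D : Differentiable ℝ d2 := hd2C.differentiable (by simp)
  have hd1 : ∀ r s, HasDerivAt (fun ρ => cu (ρ, s)) (d1 (r, s)) r := fun r s =>
    aux_hasDerivAt_fst (hcuD _)
  have hd2 : ∀ r s, HasDerivAt (fun σ' => cu (r, σ')) (d2 (r, s)) s := fun r s =>
    aux_hasDerivAt_snd (hcuD _)
  -- the r-derivative of the squared speed along r = r₀ (first variation trick)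
  have hDr : ∀ s t,
      G (Ψ r₀ s t)
        (F2 (r₀, s, t) (1, 0, 0) (0, 0, 1) + Γ (Ψ r₀ s t) (Vu (r₀, s, t)) (Tu (r₀, s, t)))
        (Tu (r₀, s, t))
      + G (Ψ r₀ s t) (Tu (r₀, s, t))
        (F2 (r₀, s, t) (1, 0, 0) (0, 0, 1) + Γ (Ψ r₀ s t) (Vu (r₀, s, t)) (Tu (r₀, s, t)))
      = d1 (r₀, s) := by
    intro s t
    have h := aux_chainG hGsmooth hGsymm hGadd hGsmul hcompat
      (hV r₀ s t) (hTr r₀ s t) (hTr r₀ s t)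
    have h2 : (fun ρ => G (Ψ ρ s t) (Tu (ρ, s, t)) (Tu (ρ, s, t))) = fun ρ => cu (ρ, s) :=
      funext fun ρ => hCconst ρ s t
    rw [h2] at h
    exact h.unique (hd1 r₀ s)
  have hlinear : ∀ s t,
      HasDerivAt (fun τ => G (Ψ r₀ s τ) (Vu (r₀, s, τ)) (Tu (r₀, s, τ))) (d1 (r₀, s) / 2) t := by
    intro s t
    have h := aux_chainG hGsmooth hGsymm hGadd hGsmul hcompat
      (hT r₀ s t) (hVt r₀ s t) (hTt r₀ s t)
    have hval : G (Ψ r₀ s t)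
          (F2 (r₀, s, t) (0, 0, 1) (1, 0, 0) + Γ (Ψ r₀ s t) (Tu (r₀, s, t)) (Vu (r₀, s, t)))
          (Tu (r₀, s, t))
        + G (Ψ r₀ s t) (Vu (r₀, s, t))
          (F2 (r₀, s, t) (0, 0, 1) (0, 0, 1) + Γ (Ψ r₀ s t) (Tu (r₀, s, t)) (Tu (r₀, s, t)))
        = d1 (r₀, s) / 2 := by
      rw [hgeo r₀ s t, hGzero2, add_zero, hsymmF2 (r₀, s, t) (0, 0, 1) (1, 0, 0),
        hΓsymm (Ψ r₀ s t) (Tu (r₀, s, t)) (Vu (r₀, s, t))]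
      have hd := hDr s t
      have hsame : G (Ψ r₀ s t) (Tu (r₀, s, t))
            (F2 (r₀, s, t) (1, 0, 0) (0, 0, 1)
              + Γ (Ψ r₀ s t) (Vu (r₀, s, t)) (Tu (r₀, s, t)))
          = G (Ψ r₀ s t)
            (F2 (r₀, s, t) (1, 0, 0) (0, 0, 1)
              + Γ (Ψ r₀ s t) (Vu (r₀, s, t)) (Tu (r₀, s, t)))
            (Tu (r₀, s, t)) := hGsymm _ _ _
      rw [hsame] at hd
      linarith
    rw [hval] at h
    exact h
  -- endpoint values of ∂ᵣΨ
  have hVu0 : ∀ s, Vu (r₀, s, 0) = deriv η r₀ := by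
    intro s
    have h1 : (fun ρ => Ψ ρ s 0) = η := funext fun ρ => hΨ0 ρ s
    have h := (hV r₀ s 0).deriv
    rw [h1] at h
    exact h.symm
  have hVuρ : ∀ s, Vu (r₀, s, ρ₀) = 0 := by
    intro s
    have h1 : (fun ρ => Ψ ρ s ρ₀) = fun _ => γ s := funext fun ρ => hΨρ ρ s
    have h := (hV r₀ s ρ₀).deriv
    rw [h1, deriv_const] at h
    exact h.symm
  have hΨu0 : ∀ s, Ψ r₀ s 0 = η r₀ := fun s => hΨ0 r₀ s
  -- Step D : d1 along the line r = r₀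
  have hd1row : ∀ s, d1 (r₀, s) = -(2 / ρ₀) * G (η r₀) (deriv η r₀) (Tu (r₀, s, 0)) := by
    intro s
    set L := d1 (r₀, s) / 2 with hLdef
    have hk : ∀ τ : ℝ, HasDerivAt
        (fun τ' => G (Ψ r₀ s τ') (Vu (r₀, s, τ')) (Tu (r₀, s, τ')) - L * τ') 0 τ := by
      intro τ
      have := (hlinear s τ).sub ((hasDerivAt_id τ).const_mul L)
      rw [show (0:ℝ) = d1 (r₀, s) / 2 - L * 1 by rw [hLdef]; ring]; exact this
    have hconst := is_const_of_deriv_eq_zero (fun τ => (hk τ).differentiableAt)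
      (fun τ => (hk τ).deriv) ρ₀ 0
    rw [hVuρ s, hΨu0 s, hVu0 s, hGzero1] at hconst
    -- hconst : 0 - L * ρ₀ = G (η r₀) (deriv η r₀) (Tu (r₀,s,0)) - L * 0
    have hL2 : d1 (r₀, s) = 2 * L := by rw [hLdef]; ring
    rw [hL2]
    field_simp at hconst ⊢
    linarith
  -- the field B(s) = Dₜ(∂ₛΨ)(r₀,s,0) = ∂ₛ(∂ₜΨ)(r₀,s,0)
  set Bu3 : ℝ × ℝ × ℝ → E := fun q => F2 q (0, 1, 0) (0, 0, 1) with hBu3def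
  have hBu3C : ContDiff ℝ (⊤ : ℕ∞) Bu3 := (hF2C.clm_apply contDiff_const).clm_apply contDiff_const
  have hBu3D : Differentiable ℝ Bu3 := hBu3C.differentiable (by simp)
  have hB : ∀ s, HasDerivAt (fun σ' => Tu (r₀, σ', 0)) (Bu3 (r₀, s, 0)) s := fun s =>
    aux_hasDerivAt_clm_slot2 (M := F1) (hF1D _) _
  have hBD : ∀ s, HasDerivAt (fun σ' => Bu3 (r₀, σ', 0)) (fderiv ℝ Bu3 (r₀, s, 0) (0, 1, 0)) s :=
    fun s => aux_hasDerivAt_slot2 (hBu3D _)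
  set Aval : E := fderiv ℝ Bu3 (r₀, s₀, 0) (0, 1, 0) with hAvaldef
  -- the squared speed along r = r₀ as a function of s
  have hcurow : ∀ s', cu (r₀, s') = G (η r₀) (Tu (r₀, s', 0)) (Tu (r₀, s', 0)) := by
    intro s'
    show G (Ψ r₀ s' 0) (Tu (r₀, s', 0)) (Tu (r₀, s', 0)) = _
    rw [hΨu0 s']
  have hd2row : ∀ s, d2 (r₀, s) = 2 * G (η r₀) (Bu3 (r₀, s, 0)) (Tu (r₀, s, 0)) := by
    intro s
    have h := aux_chainG hGsmooth hGsymm hGadd hGsmul hcompat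
      (hasDerivAt_const s (η r₀)) (hB s) (hB s)
    have h2 : (fun σ' => G (η r₀) (Tu (r₀, σ', 0)) (Tu (r₀, σ', 0))) = fun σ' => cu (r₀, σ') :=
      funext fun σ' => (hcurow σ').symm
    rw [h2] at h
    have huniq := h.unique (hd2 r₀ s)
    rw [hΓzero1, add_zero] at huniq
    rw [hGsymm (η r₀) (Tu (r₀, s, 0)) (Bu3 (r₀, s, 0))] at huniq
    linarith
  -- second s-derivative of the squared speed at (r₀, s₀)
  have he22val : deriv (fun σ' => d2 (r₀, σ')) s₀
      = 2 * G (η r₀) Aval (Tu (r₀, s₀, 0))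
        + 2 * G (η r₀) (Bu3 (r₀, s₀, 0)) (Bu3 (r₀, s₀, 0)) := by
    have h2 : (fun σ' => d2 (r₀, σ'))
        = fun σ' => 2 * G (η r₀) (Bu3 (r₀, σ', 0)) (Tu (r₀, σ', 0)) := funext hd2row
    rw [h2]
    have h := (aux_chainG hGsmooth hGsymm hGadd hGsmul hcompat
      (hasDerivAt_const s₀ (η r₀)) (hBD s₀) (hB s₀)).const_mul 2
    rw [hΓzero1, hΓzero1, add_zero, add_zero] at h
    rw [h.deriv]
    ring
  -- the auxiliary function a(s) = G(η r₀, η'(r₀), T(r₀,s,0)) and its derivatives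
  have hader : ∀ s, HasDerivAt (fun σ' => G (η r₀) (deriv η r₀) (Tu (r₀, σ', 0)))
      (G (η r₀) (deriv η r₀) (Bu3 (r₀, s, 0))) s := by
    intro s
    have h := aux_chainG hGsmooth hGsymm hGadd hGsmul hcompat
      (hasDerivAt_const s (η r₀)) (hasDerivAt_const s (deriv η r₀)) (hB s)
    rw [hΓzero1, hΓzero1, add_zero, add_zero, hGzero1, zero_add] at h
    exact h
  have hader2 : HasDerivAt (fun σ' => G (η r₀) (deriv η r₀) (Bu3 (r₀, σ', 0)))
      (G (η r₀) (deriv η r₀) Aval) s₀ := by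
    have h := aux_chainG hGsmooth hGsymm hGadd hGsmul hcompat
      (hasDerivAt_const s₀ (η r₀)) (hasDerivAt_const s₀ (deriv η r₀)) (hBD s₀)
    rw [hΓzero1, hΓzero1, add_zero, add_zero, hGzero1, zero_add] at h
    exact h
  -- Clairaut: symmetry of second derivatives of cu
  have hfcuD : Differentiable ℝ (fderiv ℝ cu) := (hcuC.fderiv_right (m := (⊤ : ℕ∞)) (by simp)).differentiable (by simp)
  have hcusymm : ∀ (z : ℝ × ℝ) (a b : ℝ × ℝ),
      fderiv ℝ (fderiv ℝ cu) z a b = fderiv ℝ (fderiv ℝ cu) z b a := fun z a b =>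
    second_derivative_symmetric (fun y => (hcuD y).hasFDerivAt) ((hfcuD z).hasFDerivAt) a b
  have hI1 : ∀ r s, fderiv ℝ d2 (r, s) (1, 0) = fderiv ℝ (fderiv ℝ cu) (r, s) (1, 0) (0, 1) := by
    intro r s
    have h1 : HasDerivAt (fun ρ => d2 (ρ, s)) (fderiv ℝ d2 (r, s) (1, 0)) r :=
      aux_hasDerivAt_fst (hd2D _)
    have h2 : HasDerivAt (fun ρ => fderiv ℝ cu (ρ, s) (0, 1))
        (fderiv ℝ (fderiv ℝ cu) (r, s) (1, 0) (0, 1)) r :=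
      aux_hasDerivAt_clm_fst (M := fderiv ℝ cu) (hfcuD _) _
    exact h1.unique h2
  have hI2 : ∀ r s, fderiv ℝ d1 (r, s) (0, 1) = fderiv ℝ (fderiv ℝ cu) (r, s) (0, 1) (1, 0) := by
    intro r s
    have h1 : HasDerivAt (fun σ' => d1 (r, σ')) (fderiv ℝ d1 (r, s) (0, 1)) s :=
      aux_hasDerivAt_snd (hd1D _)
    have h2 : HasDerivAt (fun σ' => fderiv ℝ cu (r, σ') (1, 0))
        (fderiv ℝ (fderiv ℝ cu) (r, s) (0, 1) (1, 0)) s :=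
      aux_hasDerivAt_clm_snd (M := fderiv ℝ cu) (hfcuD _) _
    exact h1.unique h2
  have he21 : ∀ r s, fderiv ℝ d2 (r, s) (1, 0) = fderiv ℝ d1 (r, s) (0, 1) := by
    intro r s
    rw [hI1, hI2, hcusymm]
  -- value of the mixed second derivative along r = r₀
  have hX12row : ∀ s, fderiv ℝ d2 (r₀, s) (1, 0)
      = -(2 / ρ₀) * G (η r₀) (deriv η r₀) (Bu3 (r₀, s, 0)) := by
    intro s
    rw [he21]
    have h1 : HasDerivAt (fun σ' => d1 (r₀, σ')) (fderiv ℝ d1 (r₀, s) (0, 1)) s :=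
      aux_hasDerivAt_snd (hd1D _)
    have h2 : HasDerivAt (fun σ' => d1 (r₀, σ'))
        (-(2 / ρ₀) * G (η r₀) (deriv η r₀) (Bu3 (r₀, s, 0))) s := by
      have hfun : (fun σ' => d1 (r₀, σ'))
          = fun σ' => -(2 / ρ₀) * G (η r₀) (deriv η r₀) (Tu (r₀, σ', 0)) := funext hd1row
      rw [hfun]
      exact (hader s).const_mul (-(2 / ρ₀))
    exact h1.unique h2
  -- third derivative: ∂ᵣ∂ₛ∂ₛ c at (r₀,s₀)
  set e22 : ℝ × ℝ → ℝ := fun z => fderiv ℝ d2 z (0, 1) with he22def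
  have he22C : ContDiff ℝ (⊤ : ℕ∞) e22 := (hd2C.fderiv_right (by simp)).clm_apply contDiff_const
  have he22D : Differentiable ℝ e22 := he22C.differentiable (by simp)
  have hfd2D : Differentiable ℝ (fderiv ℝ d2) := (hd2C.fderiv_right (m := (⊤ : ℕ∞)) (by simp)).differentiable (by simp)
  have he22pt : e22 (r₀, s₀) = 2 * G (η r₀) Aval (Tu (r₀, s₀, 0))
      + 2 * G (η r₀) (Bu3 (r₀, s₀, 0)) (Bu3 (r₀, s₀, 0)) := by
    have h1 : HasDerivAt (fun σ' => d2 (r₀, σ')) (e22 (r₀, s₀)) s₀ :=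
      aux_hasDerivAt_snd (hd2D _)
    rw [← h1.deriv]
    exact he22val
  have hX112 : fderiv ℝ e22 (r₀, s₀) (1, 0)
      = -(2 / ρ₀) * G (η r₀) (deriv η r₀) Aval := by
    have ha : fderiv ℝ e22 (r₀, s₀) (1, 0) = fderiv ℝ (fderiv ℝ d2) (r₀, s₀) (1, 0) (0, 1) := by
      have h1 : HasDerivAt (fun ρ => e22 (ρ, s₀)) (fderiv ℝ e22 (r₀, s₀) (1, 0)) r₀ :=
        aux_hasDerivAt_fst (he22D _)
      have h2 : HasDerivAt (fun ρ => fderiv ℝ d2 (ρ, s₀) (0, 1))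
          (fderiv ℝ (fderiv ℝ d2) (r₀, s₀) (1, 0) (0, 1)) r₀ :=
        aux_hasDerivAt_clm_fst (M := fderiv ℝ d2) (hfd2D _) _
      exact h1.unique h2
    have hb : fderiv ℝ (fderiv ℝ d2) (r₀, s₀) (1, 0) (0, 1)
        = fderiv ℝ (fderiv ℝ d2) (r₀, s₀) (0, 1) (1, 0) :=
      second_derivative_symmetric (fun y => (hd2D y).hasFDerivAt)
        ((hfd2D (r₀, s₀)).hasFDerivAt) _ _
    have hc : HasDerivAt (fun σ' => fderiv ℝ d2 (r₀, σ') (1, 0))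
        (fderiv ℝ (fderiv ℝ d2) (r₀, s₀) (0, 1) (1, 0)) s₀ :=
      aux_hasDerivAt_clm_snd (M := fderiv ℝ d2) (hfd2D _) _
    have hd : HasDerivAt (fun σ' => fderiv ℝ d2 (r₀, σ') (1, 0))
        (-(2 / ρ₀) * G (η r₀) (deriv η r₀) Aval) s₀ := by
      have hfun : (fun σ' => fderiv ℝ d2 (r₀, σ') (1, 0))
          = fun σ' => -(2 / ρ₀) * G (η r₀) (deriv η r₀) (Bu3 (r₀, σ', 0)) := funext hX12row
      rw [hfun]
      exact hader2.const_mul (-(2 / ρ₀))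
    rw [ha, hb]
    exact hc.unique hd
  -- identifications of the geometric objects at the base point
  have hGee : G (η r₀) (Tu (r₀, s₀, 0)) (Tu (r₀, s₀, 0)) = 1 := by
    have h := hc1
    rw [hcurow s₀] at h
    exact h
  have hp : p = η r₀ := hΨ0 r₀ s₀
  have he : e = Tu (r₀, s₀, 0) := (hT r₀ s₀ 0).deriv
  have hV0 : V 0 = deriv η r₀ := by
    show deriv (fun r => Ψ r s₀ 0) r₀ = deriv η r₀
    have h1 : (fun r => Ψ r s₀ 0) = η := funext fun r => hΨ0 r s₀
    rw [h1]
  have hW0 : W 0 = 0 := by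
    show deriv (fun s => Ψ r₀ s 0) s₀ = 0
    have h1 : (fun s => Ψ r₀ s 0) = fun _ => η r₀ := funext fun s => hΨ0 r₀ s
    rw [h1, deriv_const]
  have hWfun : W = fun t => Wu (r₀, s₀, t) := funext fun t => (hW r₀ s₀ t).deriv
  have hDtW0 : DtW0 = Bu3 (r₀, s₀, 0) := by
    show deriv W 0 + Γ (Ψ r₀ s₀ 0) (deriv (Ψ r₀ s₀) 0) (W 0) = Bu3 (r₀, s₀, 0)
    have hdW : deriv W 0 = Bu3 (r₀, s₀, 0) := by
      rw [hWfun, (hWt r₀ s₀ 0).deriv]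
      exact hsymmF2 (r₀, s₀, 0) (0, 0, 1) (0, 1, 0)
    rw [hW0, hΓzero2, add_zero, hdW]
  have hDs : ∀ u, DsdtΨ u 0 = Bu3 (r₀, u, 0) := by
    intro u
    show deriv (fun σ' => deriv (Ψ r₀ σ') 0) u
        + Γ (Ψ r₀ u 0) (deriv (fun σ' => Ψ r₀ σ' 0) u) (deriv (Ψ r₀ u) 0) = Bu3 (r₀, u, 0)
    have h1 : (fun σ' => deriv (Ψ r₀ σ') 0) = fun σ' => Tu (r₀, σ', 0) :=
      funext fun σ' => (hT r₀ σ' 0).deriv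
    have h2 : (fun σ' => Ψ r₀ σ' 0) = fun _ => η r₀ := funext fun σ' => hΨ0 r₀ σ'
    rw [h1, h2, deriv_const, hΓzero1, add_zero, (hB u).deriv]
  have hA : A = Aval := by
    show deriv (fun u => DsdtΨ u 0) s₀
        + Γ (Ψ r₀ s₀ 0) (deriv (fun u => Ψ r₀ u 0) s₀) (DsdtΨ s₀ 0) = Aval
    have h1 : (fun u => DsdtΨ u 0) = fun u => Bu3 (r₀, u, 0) := funext hDs
    have h2 : (fun u => Ψ r₀ u 0) = fun _ => η r₀ := funext fun u => hΨ0 r₀ u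
    rw [h1, h2, deriv_const, hΓzero1, add_zero, (hBD s₀).deriv]
  have hperp : ∀ X : E, perp X = X - G (η r₀) X (Tu (r₀, s₀, 0)) • Tu (r₀, s₀, 0) := by
    intro X
    show X - G p X e • e = _
    rw [hp, he]
  -- positivity of the squared speed near (r₀, s₀)
  have h01 : (0 : ℝ) < cu (r₀, s₀) := by rw [hc1]; norm_num
  have hevpos : ∀ᶠ z in nhds ((r₀, s₀) : ℝ × ℝ), 0 < cu z :=
    (hcuD.continuous.continuousAt).eventually (eventually_gt_nhds h01)
  obtain ⟨ε, hε, hball⟩ := Metric.eventually_nhds_iff.mp hevpos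
  set S : ℝ → ℝ := fun ρ => Real.sqrt (cu (ρ, s₀)) with hSdef
  have hS0 : S r₀ = 1 := by rw [hSdef]; simp only []; rw [hc1, Real.sqrt_one]
  -- first s-derivative of φ near (r₀, s₀)
  have hpd2φ : ∀ r s, dist ((r, s) : ℝ × ℝ) ((r₀, s₀) : ℝ × ℝ) < ε →
      pd2 φ r s = ρ₀ * d2 (r, s) / (2 * Real.sqrt (cu (r, s))) := by
    intro r s hrs
    show deriv (fun y => φ r y) s = _
    have hfun : (fun y => φ r y) = fun y => ρ₀ * Real.sqrt (cu (r, y)) :=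
      funext fun y => hφc r y
    rw [hfun, mul_div_assoc]
    exact (((hd2 r s).sqrt (hball hrs).ne').const_mul ρ₀).deriv
  -- second s-derivative of φ along s = s₀, near r₀
  have hQ : ∀ r, dist r r₀ < ε → pd2 (pd2 φ) r s₀
      = ρ₀ * e22 (r, s₀) / (2 * S r) - ρ₀ * d2 (r, s₀) ^ 2 / (4 * S r ^ 3) := by
    intro r hr
    have hrs₀ : dist ((r, s₀) : ℝ × ℝ) ((r₀, s₀) : ℝ × ℝ) < ε := by
      rw [Prod.dist_eq]
      simp only [dist_self]
      exact max_lt hr hε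
    have hposr : 0 < cu (r, s₀) := hball hrs₀
    have hSr : 0 < S r := Real.sqrt_pos.mpr hposr
    show deriv (fun y => pd2 φ r y) s₀ = _
    have hev : (fun y => pd2 φ r y)
        =ᶠ[nhds s₀] fun y => ρ₀ * d2 (r, y) / (2 * Real.sqrt (cu (r, y))) := by
      filter_upwards [Metric.ball_mem_nhds s₀ hε] with y hy
      have hdy : dist ((r, y) : ℝ × ℝ) ((r₀, s₀) : ℝ × ℝ) < ε := by
        rw [Prod.dist_eq]
        exact max_lt hr (Metric.mem_ball.mp hy)
      exact hpd2φ r y hdy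
    rw [hev.deriv_eq]
    have hnum : HasDerivAt (fun y => ρ₀ * d2 (r, y)) (ρ₀ * e22 (r, s₀)) s₀ :=
      (aux_hasDerivAt_snd (hd2D _)).const_mul ρ₀
    have hden : HasDerivAt (fun y => 2 * Real.sqrt (cu (r, y)))
        (2 * (d2 (r, s₀) / (2 * Real.sqrt (cu (r, s₀))))) s₀ :=
      ((hd2 r s₀).sqrt hposr.ne').const_mul 2
    have hdenne : 2 * Real.sqrt (cu (r, s₀)) ≠ 0 := by positivity
    rw [(show HasDerivAt (fun y => ρ₀ * d2 (r, y) / (2 * Real.sqrt (cu (r, y)))) _ s₀ from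
      (hnum.div hden hdenne).congr_deriv rfl).deriv]
    have hSr' : S r = Real.sqrt (cu (r, s₀)) := rfl
    rw [hSr']
    have hs0 : Real.sqrt (cu (r, s₀)) ≠ 0 := hSr.ne'
    have hsq : Real.sqrt (cu (r, s₀)) * Real.sqrt (cu (r, s₀)) = cu (r, s₀) :=
      Real.mul_self_sqrt hposr.le
    field_simp
    ring
  -- the r-derivative of the above at r₀
  have hLHS : pd1 (pd2 (pd2 φ)) r₀ s₀
      = deriv (fun ρ => ρ₀ * e22 (ρ, s₀) / (2 * S ρ) - ρ₀ * d2 (ρ, s₀) ^ 2 / (4 * S ρ ^ 3)) r₀ := by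
    show deriv (fun x => pd2 (pd2 φ) x s₀) r₀ = _
    apply Filter.EventuallyEq.deriv_eq
    filter_upwards [Metric.ball_mem_nhds r₀ hε] with r hr
    exact hQ r (Metric.mem_ball.mp hr)
  -- compute that derivative explicitly
  have hsqder : HasDerivAt S (d1 (r₀, s₀) / (2 * Real.sqrt (cu (r₀, s₀)))) r₀ :=
    (hd1 r₀ s₀).sqrt h01.ne'
  have hterm1 : HasDerivAt (fun ρ => ρ₀ * e22 (ρ, s₀) / (2 * S ρ))
      ((ρ₀ * fderiv ℝ e22 (r₀, s₀) (1, 0) * (2 * S r₀)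
          - ρ₀ * e22 (r₀, s₀) * (2 * (d1 (r₀, s₀) / (2 * Real.sqrt (cu (r₀, s₀))))))
        / (2 * S r₀) ^ 2) r₀ :=
    ((aux_hasDerivAt_fst (he22D _)).const_mul ρ₀).div (hsqder.const_mul 2)
      (by rw [hS0]; norm_num)
  have hterm2 : HasDerivAt (fun ρ => ρ₀ * d2 (ρ, s₀) ^ 2 / (4 * S ρ ^ 3))
      ((ρ₀ * ((2 : ℕ) * d2 (r₀, s₀) ^ 1 * fderiv ℝ d2 (r₀, s₀) (1, 0)) * (4 * S r₀ ^ 3)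
          - ρ₀ * d2 (r₀, s₀) ^ 2
            * (4 * ((3 : ℕ) * S r₀ ^ 2 * (d1 (r₀, s₀) / (2 * Real.sqrt (cu (r₀, s₀)))))))
        / (4 * S r₀ ^ 3) ^ 2) r₀ :=
    (((aux_hasDerivAt_fst (hd2D _)).pow 2).const_mul ρ₀).div ((hsqder.pow 3).const_mul 4)
      (by rw [hS0]; norm_num)
  have hder := hterm1.sub hterm2
  -- expansion of the perpendicular parts
  have hGexpand : ∀ X Y : E,
      G (η r₀) (X - G (η r₀) X (Tu (r₀, s₀, 0)) • Tu (r₀, s₀, 0))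
          (Y - G (η r₀) Y (Tu (r₀, s₀, 0)) • Tu (r₀, s₀, 0))
        = G (η r₀) X Y
          - G (η r₀) X (Tu (r₀, s₀, 0)) * G (η r₀) Y (Tu (r₀, s₀, 0)) := by
    intro X Y
    simp only [sub_eq_add_neg, ← neg_smul, hGadd, hGadd2, hGsmul, hGsmul2, hGee]
    rw [hGsymm (η r₀) (Tu (r₀, s₀, 0)) Y]
    ring
  -- put everything together
  rw [hLHS, (show HasDerivAt (fun ρ => ρ₀ * e22 (ρ, s₀) / (2 * S ρ) - ρ₀ * d2 (ρ, s₀) ^ 2 / (4 * S ρ ^ 3)) _ r₀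
    from hder).deriv]
  simp only [hperp]
  rw [hp, he, hA, hDtW0, hV0]
  rw [hGexpand, hGexpand, hGexpand]
  rw [hGsymm (η r₀) (Bu3 (r₀, s₀, 0)) (deriv η r₀)]
  rw [hS0, hc1, Real.sqrt_one, hX112, he22pt, hX12row s₀, hd1row s₀, hd2row s₀]
  push_cast
  field_simp
  ring

end ChartModel
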